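/- arXiv:2203.02900 — 3 statements merged into one kernel-verified Lean document; each statement's English description precedes it below -/
import Mathlib

section
/- In the weight lattice of the root system A_n (n ≥ 2) with fundamental weights ω_1,…,ω_n and simple roots α_1,…,α_n: if ω is a dominant weight with ω − 2ω_1 a nonzero element of the nonnegative integer span of the simple roots, then ω − (ω_1 + ω_2 + ω_n) also lies in the nonnegative integer span of the simple roots. -/
/-- The simple root `α_{i+1}` of the root system `A_n` expressed in the basis of
fundamental weights: `α_i = 2ω_i - ω_{i-1} - ω_{i+1}` (indices `0,…,n-1`). -/
def simpleRootA (n : ℕ) (i : Fin n) : Fin n → ℤ :=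
  fun j => if j = i then 2
    else if ((j : ℕ) + 1 = (i : ℕ)) ∨ ((i : ℕ) + 1 = (j : ℕ)) then -1 else 0

/-- `v` lies in the nonnegative integer span of the simple roots of `A_n`. -/
def nnSpanA (n : ℕ) (v : Fin n → ℤ) : Prop :=
  ∃ c : Fin n → ℕ, v = ∑ i, (c i : ℤ) • simpleRootA n i

/-!
Write `ω - 2ω₁ = ∑ cᵢ αᵢ`. In the fundamental weight basis the coordinate of `∑ cᵢ αᵢ` at a node
`k ≠ 1` is `2c_k - c_{k-1} - c_{k+1}`, and it equals `ω_k ≥ 0`: the coefficients, padded by zeros,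
form a concave sequence along the nodes `2, …, n`. So a coefficient vanishing at such a node forces
its neighbours to vanish, and the zero spreads to all of `c`, i.e. `ω = 2ω₁`. Hence `c_k ≥ 1` for
`k = 2, …, n`, and since `ω₁ + ω₂ + ω_n = 2ω₁ + α₂ + ⋯ + α_n`, subtracting `α₂ + ⋯ + α_n` from
`∑ cᵢ αᵢ` leaves a nonnegative combination.
-/

def extendByZero {M : Type*} [Zero M] {n : ℕ} (c : Fin n → M) (m : ℕ) : M :=
  if h : m < n then c ⟨m, h⟩ else 0

section extendByZero

variable {M : Type*} [Zero M] {n : ℕ} (c : Fin n → M)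

@[simp]
lemma extendByZero_val (i : Fin n) : extendByZero c i = c i := dif_pos i.2

lemma extendByZero_of_le {m : ℕ} (h : n ≤ m) : extendByZero c m = 0 := dif_neg (by omega)

lemma ite_lt_extendByZero (m : ℕ) :
    (if m < n then extendByZero c m else 0) = extendByZero c m := by
  split_ifs with h
  · rfl
  · exact (extendByZero_of_le c (by omega)).symm

end extendByZero

lemma sum_smul_simpleRootA_apply {n : ℕ} (c : Fin n → ℤ) (j : Fin n) :
    (∑ i, c i • simpleRootA n i) j
      = 2 * c j - extendByZero c (j + 1) - if (j : ℕ) = 0 then 0 else extendByZero c (j - 1) := by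
  have hsummand : ∀ i : Fin n, c i * simpleRootA n i j =
      ((if (i : ℕ) = j then 2 * extendByZero c i else 0)
        - (if (i : ℕ) = j + 1 then extendByZero c i else 0))
        - (if (j : ℕ) = 0 then 0 else if (i : ℕ) = j - 1 then extendByZero c i else 0) := by
    intro i
    simp only [simpleRootA, Fin.ext_iff, extendByZero_val]
    split_ifs <;> first | (exfalso; omega) | ring
  simp only [Finset.sum_apply, Pi.smul_apply, smul_eq_mul, hsummand]
  rw [Fin.sum_univ_eq_sum_range (fun m => ((if m = j then 2 * extendByZero c m else 0)
        - (if m = j + 1 then extendByZero c m else 0))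
        - (if (j : ℕ) = 0 then 0 else if m = j - 1 then extendByZero c m else 0))]
  simp only [Finset.sum_sub_distrib, Finset.sum_ite_irrel, Finset.sum_const_zero, Finset.sum_ite_eq',
    Finset.mem_range, ite_lt_extendByZero, extendByZero_val, j.is_lt, if_true]

lemma Nat.cast_extendByZero {n : ℕ} (c : Fin n → ℕ) (m : ℕ) :
    ((extendByZero c m : ℕ) : ℤ) = extendByZero (fun i => (c i : ℤ)) m := by
  unfold extendByZero
  split_ifs <;> rfl

lemma eq_zero_of_concave_of_interior_zero {n k : ℕ} {e : ℕ → ℕ}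
    (hconc : ∀ m, m + 1 < n → e m + e (m + 2) ≤ 2 * e (m + 1))
    (hsupp : ∀ m, n ≤ m → e m = 0) (hk : 0 < k) (hkn : k < n) (hk0 : e k = 0) (m : ℕ) :
    e m = 0 := by
  have neighbours : ∀ j, 0 < j → j < n → e j = 0 → e (j - 1) = 0 ∧ e (j + 1) = 0 := by
    intro j hj hjn hj0
    have := hconc (j - 1) (by omega)
    rw [show j - 1 + 1 = j by omega, show j - 1 + 2 = j + 1 by omega, hj0] at this
    omega
  rcases le_total k m with hkm | hmk
  · induction m, hkm using Nat.le_induction with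
    | base => exact hk0
    | succ j hkj ih =>
      by_cases hjn : j < n
      · exact (neighbours j (by omega) hjn ih).2
      · exact hsupp _ (by omega)
  · refine Nat.decreasingInduction' (P := fun j => e j = 0) (fun j hjk _ ih => ?_) hmk hk0
    simpa using (neighbours (j + 1) (by omega) (by omega) ih).1

lemma one_le_coeff_of_nonneg_apply {n : ℕ} {c : Fin n → ℕ} (hc : c ≠ 0)
    (hnonneg : ∀ j : Fin n, (j : ℕ) ≠ 0 → 0 ≤ (∑ i, (c i : ℤ) • simpleRootA n i) j)
    (k : Fin n) (hk : (k : ℕ) ≠ 0) : 1 ≤ c k := by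
  by_contra! hk0
  have hconc : ∀ m, m + 1 < n →
      extendByZero c m + extendByZero c (m + 2) ≤ 2 * extendByZero c (m + 1) := by
    intro m hm
    have := hnonneg ⟨m + 1, hm⟩ (Nat.succ_ne_zero m)
    rw [sum_smul_simpleRootA_apply] at this
    simp only [if_neg (Nat.succ_ne_zero m), Nat.add_sub_cancel] at this
    zify
    have hmid : extendByZero (fun i => (c i : ℤ)) (m + 1) = c ⟨m + 1, hm⟩ :=
      extendByZero_val _ ⟨m + 1, hm⟩
    simp only [Nat.cast_extendByZero]
    linarith
  refine hc (funext fun i => ?_)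
  simpa using eq_zero_of_concave_of_interior_zero hconc (fun m => extendByZero_of_le c)
    (Nat.pos_of_ne_zero hk) k.is_lt (by simpa using hk0) i

lemma nnSpanA_sum_sub_sum {n : ℕ} {c d : Fin n → ℕ} (hdc : d ≤ c) :
    nnSpanA n (∑ i, (c i : ℤ) • simpleRootA n i - ∑ i, (d i : ℤ) • simpleRootA n i) := by
  refine ⟨c - d, ?_⟩
  simp only [← Finset.sum_sub_distrib, ← sub_smul, Pi.sub_apply, Nat.cast_sub (hdc _)]

lemma single_zero_add_single_one_add_single_last {n : ℕ} (hn : 2 ≤ n) :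
    Pi.single ⟨0, Nat.zero_lt_of_lt hn⟩ (1 : ℤ) + Pi.single ⟨1, hn⟩ (1 : ℤ)
        + Pi.single ⟨n - 1, Nat.sub_one_lt_of_lt hn⟩ (1 : ℤ)
      = Pi.single ⟨0, Nat.zero_lt_of_lt hn⟩ (2 : ℤ)
        + ∑ i : Fin n, ((if (i : ℕ) = 0 then 0 else 1 : ℕ) : ℤ) • simpleRootA n i := by
  funext j
  simp only [Pi.add_apply, sum_smul_simpleRootA_apply, extendByZero, Pi.single_apply, Fin.ext_iff]
  split_ifs <;> push_cast <;> omega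

/-- Weights are written in the fundamental weight basis, so `ω_k` is `Pi.single ⟨k - 1, _⟩ 1`. -/
theorem stmt3 (n : ℕ) (hn : 2 ≤ n)
    (ω : Fin n → ℤ) (hdom : ∀ i, 0 ≤ ω i)
    (hsub : nnSpanA n (ω - Pi.single ⟨0, by omega⟩ (2 : ℤ)))
    (hne : ω ≠ Pi.single ⟨0, by omega⟩ (2 : ℤ)) :
    nnSpanA n (ω - (Pi.single ⟨0, by omega⟩ (1 : ℤ) + Pi.single ⟨1, by omega⟩ (1 : ℤ)
      + Pi.single ⟨n - 1, by omega⟩ (1 : ℤ))) := by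
  obtain ⟨c, hc⟩ := hsub
  have hc0 : c ≠ 0 := by
    rintro rfl
    exact hne (sub_eq_zero.mp (by simpa using hc))
  have hnonneg : ∀ j : Fin n, (j : ℕ) ≠ 0 → 0 ≤ (∑ i, (c i : ℤ) • simpleRootA n i) j := by
    intro j hj
    rw [← hc, Pi.sub_apply, Pi.single_eq_of_ne (by simpa [Fin.ext_iff] using hj), sub_zero]
    exact hdom j
  have hcoeff : (fun i : Fin n => if (i : ℕ) = 0 then 0 else 1) ≤ c := by
    intro i
    by_cases hi : (i : ℕ) = 0
    · simp [hi]
    · simpa [hi] using one_le_coeff_of_nonneg_apply hc0 hnonneg i hi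
  rw [single_zero_add_single_one_add_single_last hn, ← sub_sub, hc]
  exact nnSpanA_sum_sub_sum hcoeff
end

section
/- Let F be a field of characteristic 3 and a, b ∈ F^× with s regular, i.e., none of b, a^3 b, a^3 b^2, a, ab, a^2 b equals 1. If b ∈ {b^{−1}, a^3 b, (a^3 b)^{−1}, a^3 b^2, (a^3 b^2)^{−1}}, then b = −1 and a^2 ∉ {1, −1}. -/
lemma cube_eq_one_char3 {F : Type*} [Field F] [CharP F 3] {x : F}
    (h : x ^ 3 = 1) : x = 1 := by
  have h3 : (3 : F) = 0 := CharP.cast_eq_zero F 3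
  have h0 : (x - 1) ^ 3 = 0 := by linear_combination h + (-x ^ 2 + x) * h3
  have := pow_eq_zero_iff (n := 3) (by norm_num) |>.mp h0
  linear_combination this

/-- The `G_2`, `p = 3` computation: with `α_1(s) = a`, `α_2(s) = b` and `s` regular
(none of `b, a³b, a³b², a, ab, a²b` equals 1), if there is a coincidence among the
long-root values, i.e. `b ∈ {b⁻¹, a³b, (a³b)⁻¹, a³b², (a³b²)⁻¹}`, then `b = -1`,
`a² ≠ 1` and `a² ≠ -1`. -/
theorem stmt14 {F : Type*} [Field F] [CharP F 3]
    (a b : F) (ha : a ≠ 0) (hb : b ≠ 0)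
    (r1 : b ≠ 1) (r2 : a ^ 3 * b ≠ 1) (r3 : a ^ 3 * b ^ 2 ≠ 1)
    (r4 : a ≠ 1) (r5 : a * b ≠ 1) (r6 : a ^ 2 * b ≠ 1)
    (h : b = b⁻¹ ∨ b = a ^ 3 * b ∨ b = (a ^ 3 * b)⁻¹ ∨
      b = a ^ 3 * b ^ 2 ∨ b = (a ^ 3 * b ^ 2)⁻¹) :
    b = -1 ∧ a ^ 2 ≠ 1 ∧ a ^ 2 ≠ -1 := by
  have hbm : b = -1 := by
    rcases h with h | h | h | h | h
    · field_simp at h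
      rcases mul_self_eq_one_iff.mp (by linear_combination h : b * b = 1) with h1 | h1
      · exact absurd h1 r1
      · exact h1
    · have ha3 : a ^ 3 = 1 := mul_right_cancel₀ hb (h.symm.trans (one_mul b).symm)
      exact absurd (cube_eq_one_char3 ha3) r4
    · exfalso
      apply r3
      have hne : a ^ 3 * b ≠ 0 := mul_ne_zero (pow_ne_zero _ ha) hb
      field_simp at h
      linear_combination h
    · exfalso
      apply r2
      have := mul_left_cancel₀ hb (by linear_combination h : b * 1 = b * (a ^ 3 * b))
      linear_combination -this
    · exfalso
      apply r5
      have hne : a ^ 3 * b ^ 2 ≠ 0 := mul_ne_zero (pow_ne_zero _ ha) (pow_ne_zero _ hb)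
      field_simp at h
      exact cube_eq_one_char3 (by linear_combination h : (a * b) ^ 3 = 1)
  subst hbm
  refine ⟨rfl, ?_, ?_⟩
  · intro h1
    rcases mul_self_eq_one_iff.mp (by linear_combination h1 : a * a = 1) with h2 | h2
    · exact r4 h2
    · apply r2; rw [h2]; ring
  · intro h1
    apply r6
    rw [h1]; ring
end

section
/- Let F be a field and let b_0 ∈ F^× be a primitive p_0-th root of unity for a prime p_0 > 11, and let b_1, …, b_k ∈ F^× be primitive roots of unity of pairwise distinct prime orders p_1, …, p_k, all greater than 11 and different from p_0. Then the following field elements are pairwise distinct: 1; b_0^{±2}; b_0^{±6}; b_0^{±10}; b_i^{±2} for 1 ≤ i ≤ k; and all elements of the form b_0^{±m}·x with m ∈ {1,3,7,9} and x ∈ {b_1^{e_1}⋯b_k^{e_k} : e_i ∈ {+1,−1}}. -/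
open Finset

private lemma stmt16_unit {F : Type*} [Field F] {a : F} {q : ℕ} (hq : 0 < q)
    (h : orderOf a = q) : ∃ u : Fˣ, (u : F) = a ∧ orderOf u = q := by
  have hf : IsOfFinOrder a := by rw [← orderOf_pos_iff, h]; exact hq
  refine ⟨hf.isUnit.unit, hf.isUnit.unit_spec, ?_⟩
  rw [← orderOf_units, hf.isUnit.unit_spec, h]

/-- Distinctness computation from the B_n/C_n construction: if `b₀` is a primitive
`p₀`-th root of unity for a prime `p₀ > 11`, and `b₁,…,b_k` are primitive roots of
unity of pairwise distinct prime orders all `> 11` and different from `p₀`, then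
the elements `1`, `b₀^{±2}`, `b₀^{±6}`, `b₀^{±10}`, `b_i^{±2}`, and
`b₀^{±m}·∏ b_i^{±1}` for `m ∈ {1,3,7,9}` are pairwise distinct; encoded as
injectivity of `(m, e) ↦ b₀^m · ∏ b_i^{e i}` on the set of allowed exponent
patterns. -/
theorem stmt16 {F : Type*} [Field F] {k : ℕ} (hk : 1 ≤ k)
    (p0 : ℕ) (hp0 : p0.Prime) (hp0' : 11 < p0)
    (b0 : F) (hb0 : orderOf b0 = p0)
    (p : Fin k → ℕ) (hp : ∀ i, (p i).Prime) (hp' : ∀ i, 11 < p i)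
    (hpinj : Function.Injective p) (hpne : ∀ i, p i ≠ p0)
    (b : Fin k → F) (hb : ∀ i, orderOf (b i) = p i)
    (P : Set (ℤ × (Fin k → ℤ)))
    (hP : P = {x : ℤ × (Fin k → ℤ) |
      (x = (0, 0)) ∨
      (x.2 = 0 ∧ (x.1 = 2 ∨ x.1 = -2 ∨ x.1 = 6 ∨ x.1 = -6 ∨ x.1 = 10 ∨ x.1 = -10)) ∨
      (x.1 = 0 ∧ ∃ i : Fin k,
        (x.2 = fun j => if j = i then (2 : ℤ) else 0) ∨
        (x.2 = fun j => if j = i then (-2 : ℤ) else 0)) ∨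
      ((x.1 = 1 ∨ x.1 = -1 ∨ x.1 = 3 ∨ x.1 = -3 ∨ x.1 = 7 ∨ x.1 = -7 ∨
          x.1 = 9 ∨ x.1 = -9) ∧ ∀ j, x.2 j = 1 ∨ x.2 j = -1)}) :
    Set.InjOn (fun x : ℤ × (Fin k → ℤ) => b0 ^ x.1 * ∏ i, b i ^ x.2 i) P := by
  -- basic facts about members of P
  set j0 : Fin k := ⟨0, hk⟩ with hj0
  have hfacts : ∀ z ∈ P,
      (∀ i, -2 ≤ z.2 i ∧ z.2 i ≤ 2) ∧ (-10 ≤ z.1 ∧ z.1 ≤ 10) ∧ (z.1 - z.2 j0) % 2 = 0 := by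
    intro z hz
    rw [hP] at hz
    rcases hz with h | ⟨h2, h1⟩ | ⟨h1, i, h2 | h2⟩ | ⟨h1, h2⟩
    · subst h; refine ⟨fun i => by norm_num, by norm_num, by norm_num⟩
    · rw [h2]
      refine ⟨fun i => by norm_num, by omega, ?_⟩
      simp only [Pi.zero_apply]
      omega
    · refine ⟨fun i' => by rw [h2]; dsimp only; split <;> norm_num, by rw [h1]; norm_num, ?_⟩
      rw [h1, h2]; dsimp only; split <;> norm_num
    · refine ⟨fun i' => by rw [h2]; dsimp only; split <;> norm_num, by rw [h1]; norm_num, ?_⟩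
      rw [h1, h2]; dsimp only; split <;> norm_num
    · refine ⟨fun i' => by rcases h2 i' with h | h <;> omega,
        by rcases h1 with h|h|h|h|h|h|h|h <;> omega, ?_⟩
      rcases h2 j0 with h | h <;> rcases h1 with h'|h'|h'|h'|h'|h'|h'|h' <;> omega
  intro x hx y hy h
  obtain ⟨hxA, hxB, hxC⟩ := hfacts x hx
  obtain ⟨hyA, hyB, hyC⟩ := hfacts y hy
  -- move to units
  obtain ⟨u0, hu0, hu0o⟩ := stmt16_unit hp0.pos hb0
  have hch : ∀ i, ∃ u : Fˣ, (u : F) = b i ∧ orderOf u = p i :=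
    fun i => stmt16_unit (hp i).pos (hb i)
  choose u hu huo using hch
  have hU : u0 ^ x.1 * ∏ i, u i ^ x.2 i = u0 ^ y.1 * ∏ i, u i ^ y.2 i := by
    have hcoe : ∀ z : ℤ × (Fin k → ℤ),
        ((u0 ^ z.1 * ∏ i, u i ^ z.2 i : Fˣ) : F) = b0 ^ z.1 * ∏ i, b i ^ z.2 i := by
      intro z
      have hpr : ((∏ i, u i ^ z.2 i : Fˣ) : F) = ∏ i, ((u i ^ z.2 i : Fˣ) : F) :=
        map_prod (Units.coeHom F) _ _
      rw [Units.val_mul, Units.val_zpow_eq_zpow_val, hu0, hpr]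
      simp only [Units.val_zpow_eq_zpow_val, hu]
    apply Units.ext
    rw [hcoe, hcoe]
    exact h
  -- each b_i exponent coincides
  have hcomp : ∀ j, x.2 j = y.2 j := by
    intro j
    set N : ℕ := p0 * ∏ i ∈ univ.erase j, p i with hN
    have hNd0 : (p0 : ℤ) ∣ (N : ℤ) := by exact_mod_cast Dvd.intro _ rfl
    have hNdi : ∀ i, i ≠ j → (p i : ℤ) ∣ (N : ℤ) := by
      intro i hij
      have : p i ∣ N := Dvd.dvd.mul_left (Finset.dvd_prod_of_mem p (by simp [hij])) p0
      exact_mod_cast this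
    have hpowN : ∀ z : ℤ × (Fin k → ℤ),
        (u0 ^ z.1 * ∏ i, u i ^ z.2 i) ^ (N : ℤ) = u j ^ (z.2 j * N) := by
      intro z
      rw [mul_zpow, ← zpow_mul]
      have h1 : u0 ^ (z.1 * (N : ℤ)) = 1 :=
        orderOf_dvd_iff_zpow_eq_one.mp (by rw [hu0o]; exact hNd0.mul_left _)
      have h2 : u j ^ (z.2 j * (N : ℤ)) = (u j ^ z.2 j) ^ (N : ℤ) := zpow_mul _ _ _
      rw [h1, one_mul, ← Finset.prod_zpow, h2]
      refine Finset.prod_eq_single j (fun i _ hij => ?_) (fun hj => (hj (mem_univ j)).elim)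
      rw [← zpow_mul]
      exact orderOf_dvd_iff_zpow_eq_one.mp (by rw [huo]; exact (hNdi i hij).mul_left _)
    have hj : u j ^ (x.2 j * (N : ℤ)) = u j ^ (y.2 j * (N : ℤ)) := by
      rw [← hpowN x, ← hpowN y, hU]
    have hdvd : (p j : ℤ) ∣ (x.2 j - y.2 j) * (N : ℤ) := by
      rw [← huo j]
      rw [orderOf_dvd_iff_zpow_eq_one, sub_mul, zpow_sub, hj]
      simp
    have hcop : Nat.Coprime (p j) N := by
      refine Nat.Coprime.mul_right ?_ (Nat.Coprime.prod_right ?_)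
      · exact (Nat.coprime_primes (hp j) hp0).mpr (hpne j)
      · intro i hi
        exact (Nat.coprime_primes (hp j) (hp i)).mpr
          (fun he => (Finset.mem_erase.mp hi).1 (hpinj he.symm))
    have hdvd2 : (p j : ℤ) ∣ (x.2 j - y.2 j) := by
      have h1 : p j ∣ (x.2 j - y.2 j).natAbs * N := by
        have := Int.natAbs_dvd_natAbs.mpr hdvd
        simpa [Int.natAbs_mul] using this
      have h2 : p j ∣ (x.2 j - y.2 j).natAbs := hcop.dvd_of_dvd_mul_right h1
      exact Int.natAbs_dvd_natAbs.mp (by simpa using h2)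
    by_contra hne
    have hne' : x.2 j - y.2 j ≠ 0 := fun hc => hne (by omega)
    have hle : (p j : ℤ) ≤ |x.2 j - y.2 j| :=
      Int.le_of_dvd (abs_pos.mpr hne') ((dvd_abs _ _).mpr hdvd2)
    have h13 : (13 : ℤ) ≤ (p j : ℤ) := by
      obtain ⟨m, hm⟩ := (hp j).odd_of_ne_two (by have := hp' j; omega)
      have := hp' j
      exact_mod_cast (by omega : 13 ≤ p j)
    obtain ⟨hx2, -⟩ := hxA j
    obtain ⟨hy2, -⟩ := hyA j
    have := (hxA j).2
    have := (hyA j).2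
    have : |x.2 j - y.2 j| ≤ 4 := by rw [abs_le]; omega
    omega
  have hx2 : x.2 = y.2 := funext hcomp
  -- now the b0 exponents coincide
  have hU' : u0 ^ x.1 = u0 ^ y.1 := by
    rw [hx2] at hU
    exact mul_right_cancel hU
  have hdvd0 : (p0 : ℤ) ∣ x.1 - y.1 := by
    rw [← hu0o, orderOf_dvd_iff_zpow_eq_one, zpow_sub, hU']
    simp
  have heven : (2 : ℤ) ∣ x.1 - y.1 := by
    have := hcomp j0
    omega
  have hcop2 : Nat.Coprime 2 p0 := by
    refine (Nat.coprime_primes Nat.prime_two hp0).mpr (by omega)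
  have hdd : ((2 * p0 : ℕ) : ℤ) ∣ x.1 - y.1 := by
    have h2 : (2 : ℕ) ∣ (x.1 - y.1).natAbs := by
      rw [← Int.natAbs_natCast 2, Int.natAbs_dvd_natAbs]; exact_mod_cast heven
    have hq : p0 ∣ (x.1 - y.1).natAbs := by
      rw [← Int.natAbs_natCast p0, Int.natAbs_dvd_natAbs]; exact_mod_cast hdvd0
    have := Nat.Coprime.mul_dvd_of_dvd_of_dvd hcop2 h2 hq
    exact Int.natAbs_dvd_natAbs.mp (by rw [Int.natAbs_natCast]; exact this)
  have h1eq : x.1 = y.1 := by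
    by_contra hne
    have hne' : x.1 - y.1 ≠ 0 := fun hc => hne (by omega)
    have hle : ((2 * p0 : ℕ) : ℤ) ≤ |x.1 - y.1| :=
      Int.le_of_dvd (abs_pos.mpr hne') ((dvd_abs _ _).mpr hdd)
    have hb : |x.1 - y.1| ≤ 20 := by rw [abs_le]; omega
    have : ((2 * p0 : ℕ) : ℤ) ≥ 24 := by exact_mod_cast (by omega : 24 ≤ 2 * p0)
    omega
  exact Prod.ext h1eq hx2
end
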